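/- Let (V,E,μ) be an infinite, connected, locally finite weighted graph satisfying condition (p₀), let m>1, fix o∈V, and suppose p < 0 and q = m−1 (region G₄). If there exist constants α>0, C>0 and N∈ℕ such that W_o(n) ≤ C·n^{α} for all n ≥ N (i.e., W_o has polynomial growth of some order), then every positive solution of (★) on V is constant; i.e., (★) admits no nontrivial positive solution. -/

import Mathlib

variable {V : Type*}

/-- Vertex measure `μ(x) = ∑_{y} μ_{xy}` of a weighted graph. -/
noncomputable def vMeasure (μ : V → V → ℝ) (x : V) : ℝ := ∑ᶠ y, μ x y

/-- The `m`-Laplacian on a weighted graph. -/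
noncomputable def lapM (μ : V → V → ℝ) (m : ℝ) (u : V → ℝ) (x : V) : ℝ :=
  (vMeasure μ x)⁻¹ * ∑ᶠ y, μ x y * |u y - u x| ^ (m - 2) * (u y - u x)

/-- The norm of the gradient on a weighted graph. -/
noncomputable def gradNorm (μ : V → V → ℝ) (u : V → ℝ) (x : V) : ℝ :=
  Real.sqrt (∑ᶠ y, μ x y / (2 * vMeasure μ x) * (u y - u x) ^ 2)

open Classical in
/-- `W_o(n)`: the sum of `μ_{xy}` over pairs `(x,y)` with `x ∈ B(o,n)`, `y ∈ V`
and `d(o,x) < d(o,y)`. -/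
noncomputable def Wvol (G : SimpleGraph V) (μ : V → V → ℝ) (o : V) (n : ℕ) : ℝ :=
  ∑ᶠ x, ∑ᶠ y, if G.dist o x ≤ n ∧ G.dist o x < G.dist o y then μ x y else 0


lemma exists_adj_closer (G : SimpleGraph V) (hconn : G.Connected) (o x : V) (hx : x ≠ o) :
    ∃ y, G.Adj y x ∧ G.dist o y < G.dist o x := by
  obtain ⟨p, hp⟩ := (hconn o x).exists_walk_length_eq_dist
  have hd : G.dist o x ≠ 0 := by
    simp only [ne_eq, hconn.dist_eq_zero_iff]; exact fun h => hx h.symm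
  have hnil : ¬ p.reverse.Nil := by
    rw [SimpleGraph.Walk.not_nil_iff_lt_length]
    simp only [SimpleGraph.Walk.length_reverse]
    omega
  obtain ⟨y, h, q, hq⟩ := SimpleGraph.Walk.not_nil_iff.mp hnil
  have hlen : q.length + 1 = p.length := by
    have := congrArg SimpleGraph.Walk.length hq
    simp only [SimpleGraph.Walk.length_reverse, SimpleGraph.Walk.length_cons] at this
    omega
  have hdy : G.dist o y ≤ q.length := by
    simpa using SimpleGraph.dist_le q.reverse
  exact ⟨y, h.symm, by omega⟩

lemma ball_finite (G : SimpleGraph V) (hconn : G.Connected)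
    (hlf : ∀ x, (G.neighborSet x).Finite) (o : V) :
    ∀ n : ℕ, {x : V | G.dist o x ≤ n}.Finite := by
  intro n
  induction n with
  | zero =>
    apply Set.Finite.subset (Set.finite_singleton o)
    intro x hx
    simp only [Set.mem_setOf_eq, Nat.le_zero] at hx
    simp [(hconn.dist_eq_zero_iff).mp hx]
  | succ n ih =>
    apply Set.Finite.subset (ih.union (Set.Finite.biUnion ih (fun y _ => hlf y)))
    intro x hx
    simp only [Set.mem_setOf_eq] at hx
    rcases Nat.lt_or_ge (G.dist o x) (n+1) with h | h
    · exact Or.inl (by simpa using Nat.lt_succ_iff.mp h)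
    · have hxo : x ≠ o := by
        intro rfl'
        rw [rfl'] at h
        simp [SimpleGraph.dist_self] at h
      obtain ⟨y, hyadj, hylt⟩ := exists_adj_closer G hconn o x hxo
      refine Or.inr (Set.mem_biUnion (show G.dist o y ≤ n by omega) ?_)
      exact hyadj

section wg


variable {G : SimpleGraph V} {μ : V → V → ℝ}

noncomputable def nbhd (hlf : ∀ x : V, (G.neighborSet x).Finite) (x : V) : Finset V :=
  (hlf x).toFinset

lemma mem_nbhd (hlf : ∀ x : V, (G.neighborSet x).Finite) {x y : V} :
    y ∈ nbhd hlf x ↔ G.Adj x y := by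
  simp [nbhd, Set.Finite.mem_toFinset]

lemma mu_eq_zero (hnonneg : ∀ x y, 0 ≤ μ x y) (hadj : ∀ x y, 0 < μ x y ↔ G.Adj x y)
    {x y : V} (h : ¬ G.Adj x y) : μ x y = 0 := by
  by_contra hc
  exact h ((hadj x y).mp (lt_of_le_of_ne (hnonneg x y) (Ne.symm hc)))

lemma support_subset_nbhd (hnonneg : ∀ x y, 0 ≤ μ x y) (hadj : ∀ x y, 0 < μ x y ↔ G.Adj x y)
    (hlf : ∀ x : V, (G.neighborSet x).Finite) (x : V) (f : V → ℝ)
    (hf : ∀ y, μ x y = 0 → f y = 0) :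
    Function.support f ⊆ (nbhd hlf x : Set V) := by
  intro y hy
  simp only [Function.mem_support] at hy
  by_contra hc
  exact hy (hf y (mu_eq_zero hnonneg hadj (fun h => hc (by simpa [mem_nbhd hlf] using h))))

lemma finsum_eq_nbhd (hnonneg : ∀ x y, 0 ≤ μ x y) (hadj : ∀ x y, 0 < μ x y ↔ G.Adj x y)
    (hlf : ∀ x : V, (G.neighborSet x).Finite) (x : V) (f : V → ℝ)
    (hf : ∀ y, μ x y = 0 → f y = 0) :
    ∑ᶠ y, f y = ∑ y ∈ nbhd hlf x, f y :=
  finsum_eq_finset_sum_of_support_subset f (support_subset_nbhd hnonneg hadj hlf x f hf)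

lemma vMeasure_eq_sum (hnonneg : ∀ x y, 0 ≤ μ x y) (hadj : ∀ x y, 0 < μ x y ↔ G.Adj x y)
    (hlf : ∀ x : V, (G.neighborSet x).Finite) (x : V) :
    vMeasure μ x = ∑ y ∈ nbhd hlf x, μ x y :=
  finsum_eq_nbhd hnonneg hadj hlf x _ (fun _ h => h)

lemma exists_neighbor (hinf : Infinite V) (hconn : G.Connected) (x : V) :
    ∃ y, G.Adj x y := by
  obtain ⟨z, hz⟩ := exists_ne x
  obtain ⟨p⟩ := hconn x z
  cases p with
  | nil => exact absurd rfl hz.symm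
  | cons h q => exact ⟨_, h⟩

lemma vMeasure_pos (hnonneg : ∀ x y, 0 ≤ μ x y) (hadj : ∀ x y, 0 < μ x y ↔ G.Adj x y)
    (hlf : ∀ x : V, (G.neighborSet x).Finite) (hinf : Infinite V) (hconn : G.Connected)
    (x : V) : 0 < vMeasure μ x := by
  obtain ⟨y, hy⟩ := exists_neighbor hinf hconn x
  rw [vMeasure_eq_sum hnonneg hadj hlf x]
  exact Finset.sum_pos' (fun z _ => hnonneg x z)
    ⟨y, (mem_nbhd hlf).mpr hy, (hadj x y).mpr hy⟩

lemma mu_le_vMeasure (hnonneg : ∀ x y, 0 ≤ μ x y) (hadj : ∀ x y, 0 < μ x y ↔ G.Adj x y)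
    (hlf : ∀ x : V, (G.neighborSet x).Finite) (x y : V) :
    μ x y ≤ vMeasure μ x := by
  rw [vMeasure_eq_sum hnonneg hadj hlf x]
  by_cases h : G.Adj x y
  · exact Finset.single_le_sum (fun z _ => hnonneg x z) ((mem_nbhd hlf).mpr h)
  · rw [mu_eq_zero hnonneg hadj h]
    exact Finset.sum_nonneg (fun z _ => hnonneg x z)

lemma vMeasure_le (hnonneg : ∀ x y, 0 ≤ μ x y) (hadj : ∀ x y, 0 < μ x y ↔ G.Adj x y)
    (hlf : ∀ x : V, (G.neighborSet x).Finite) (hinf : Infinite V) (hconn : G.Connected)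
    {p₀ : ℝ} (hp₀ : 1 < p₀) (hcond : ∀ x y, G.Adj x y → 1 / p₀ ≤ μ x y / vMeasure μ x)
    {x y : V} (h : G.Adj x y) : vMeasure μ x ≤ p₀ * μ x y := by
  have hv := vMeasure_pos hnonneg hadj hlf hinf hconn x
  have := hcond x y h
  rw [div_le_div_iff₀ (by linarith) hv] at this
  linarith


lemma gradNorm_nonneg (u : V → ℝ) (x : V) : 0 ≤ gradNorm μ u x := Real.sqrt_nonneg _

lemma gradNorm_sq (hnonneg : ∀ x y, 0 ≤ μ x y) (hadj : ∀ x y, 0 < μ x y ↔ G.Adj x y)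
    (hlf : ∀ x : V, (G.neighborSet x).Finite) (hinf : Infinite V) (hconn : G.Connected)
    (u : V → ℝ) (x : V) :
    gradNorm μ u x ^ 2 = ∑ y ∈ nbhd hlf x, μ x y / (2 * vMeasure μ x) * (u y - u x) ^ 2 := by
  have hv := vMeasure_pos hnonneg hadj hlf hinf hconn x
  have h0 : (0:ℝ) ≤ ∑ᶠ y, μ x y / (2 * vMeasure μ x) * (u y - u x) ^ 2 := by
    apply finsum_nonneg
    intro y
    have := hnonneg x y
    positivity
  rw [gradNorm, Real.sq_sqrt h0]
  exact finsum_eq_nbhd hnonneg hadj hlf x _ (fun y hy => by rw [hy]; ring)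

lemma diff_le_grad (hnonneg : ∀ x y, 0 ≤ μ x y) (hadj : ∀ x y, 0 < μ x y ↔ G.Adj x y)
    (hlf : ∀ x : V, (G.neighborSet x).Finite) (hinf : Infinite V) (hconn : G.Connected)
    {p₀ : ℝ} (hp₀ : 1 < p₀) (hcond : ∀ x y, G.Adj x y → 1 / p₀ ≤ μ x y / vMeasure μ x)
    (u : V → ℝ) {x y : V} (h : G.Adj x y) :
    |u y - u x| ≤ Real.sqrt (2 * p₀) * gradNorm μ u x := by
  have hv := vMeasure_pos hnonneg hadj hlf hinf hconn x
  have hp₀0 : (0:ℝ) < p₀ := by linarith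
  have hterm : (u y - u x) ^ 2 / (2 * p₀) ≤ μ x y / (2 * vMeasure μ x) * (u y - u x) ^ 2 := by
    have h1 : 1 / (2 * p₀) ≤ μ x y / (2 * vMeasure μ x) := by
      have := hcond x y h
      rw [div_le_div_iff₀ (by linarith) hv] at this
      rw [div_le_div_iff₀ (by linarith) (by linarith)]
      linarith
    calc (u y - u x) ^ 2 / (2 * p₀) = 1 / (2 * p₀) * (u y - u x) ^ 2 := by ring
    _ ≤ μ x y / (2 * vMeasure μ x) * (u y - u x) ^ 2 :=
        mul_le_mul_of_nonneg_right h1 (sq_nonneg _)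
  have hsum : (u y - u x) ^ 2 / (2 * p₀) ≤ gradNorm μ u x ^ 2 := by
    rw [gradNorm_sq hnonneg hadj hlf hinf hconn u x]
    refine le_trans hterm (Finset.single_le_sum (f := fun z => μ x z / (2 * vMeasure μ x) * (u z - u x) ^ 2) (fun z _ => ?_) ((mem_nbhd hlf).mpr h))
    have := hnonneg x z
    positivity
  have h2 : (u y - u x) ^ 2 ≤ 2 * p₀ * gradNorm μ u x ^ 2 := by
    rw [div_le_iff₀ (by linarith)] at hsum
    linarith
  calc |u y - u x| = Real.sqrt ((u y - u x) ^ 2) := (Real.sqrt_sq_eq_abs _).symm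
  _ ≤ Real.sqrt (2 * p₀ * gradNorm μ u x ^ 2) := Real.sqrt_le_sqrt h2
  _ = Real.sqrt (2 * p₀) * gradNorm μ u x := by
      rw [Real.sqrt_mul (by linarith), Real.sqrt_sq (gradNorm_nonneg u x)]


lemma term_bound (hnonneg : ∀ x y, 0 ≤ μ x y) (hadj : ∀ x y, 0 < μ x y ↔ G.Adj x y)
    (hlf : ∀ x : V, (G.neighborSet x).Finite) (hinf : Infinite V) (hconn : G.Connected)
    {p₀ : ℝ} (hp₀ : 1 < p₀) (hcond : ∀ x y, G.Adj x y → 1 / p₀ ≤ μ x y / vMeasure μ x)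
    {m : ℝ} (hm : 1 < m) (u : V → ℝ) {M : ℝ} (hM : 0 < M)
    {x y : V} (h : G.Adj x y) (hux : 0 < u x) (huy : 0 < u y) (hxM : u x < M) (hyM : u y < M) :
    -(μ x y * min (Real.sqrt (2 * p₀) * gradNorm μ u x) M ^ (m - 1))
      ≤ μ x y * |u y - u x| ^ (m - 2) * (u y - u x) := by
  set Dt := min (Real.sqrt (2 * p₀) * gradNorm μ u x) M with hDt
  have hc₁ : (0:ℝ) < Real.sqrt (2 * p₀) := Real.sqrt_pos.mpr (by linarith)
  have hDt0 : 0 ≤ Dt := le_min (mul_nonneg hc₁.le (gradNorm_nonneg u x)) hM.le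
  have hrpDt : (0:ℝ) ≤ Dt ^ (m - 1) := Real.rpow_nonneg hDt0 _
  by_cases hΔ : u y - u x = 0
  · rw [hΔ]
    simp only [mul_zero]
    exact neg_nonpos_of_nonneg (mul_nonneg (hnonneg x y) hrpDt)
  · have hΔle : |u y - u x| ≤ Dt := by
      refine le_min (diff_le_grad hnonneg hadj hlf hinf hconn hp₀ hcond u h) ?_
      exact le_of_lt (abs_lt.mpr ⟨by linarith, by linarith⟩)
    have habs : |μ x y * |u y - u x| ^ (m - 2) * (u y - u x)| ≤ μ x y * Dt ^ (m - 1) := by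
      rw [abs_mul, abs_mul, abs_of_nonneg (hnonneg x y),
        abs_of_nonneg (Real.rpow_nonneg (abs_nonneg _) _), mul_assoc]
      have : |u y - u x| ^ (m - 2) * |u y - u x| = |u y - u x| ^ (m - 1) := by
        rw [← Real.rpow_add_one (abs_ne_zero.mpr hΔ)]
        ring_nf
      rw [this]
      exact mul_le_mul_of_nonneg_left
        (Real.rpow_le_rpow (abs_nonneg _) hΔle (by linarith)) (hnonneg x y)
    linarith [neg_abs_le (μ x y * |u y - u x| ^ (m - 2) * (u y - u x))]

lemma key_pointwise (hnonneg : ∀ x y, 0 ≤ μ x y) (hadj : ∀ x y, 0 < μ x y ↔ G.Adj x y)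
    (hlf : ∀ x : V, (G.neighborSet x).Finite) (hinf : Infinite V) (hconn : G.Connected)
    {p₀ : ℝ} (hp₀ : 1 < p₀) (hcond : ∀ x y, G.Adj x y → 1 / p₀ ≤ μ x y / vMeasure μ x)
    {m p q : ℝ} (hm : 1 < m) (hp : p < 0) (hq : q = m - 1)
    (u : V → ℝ) (hu : ∀ x, 0 < u x)
    (hsol : ∀ x, lapM μ m u x + u x ^ p * gradNorm μ u x ^ q ≤ 0)
    {M : ℝ} (hM : 0 < M) {x : V} (hxM : u x < M) :
    ∑ y ∈ (nbhd hlf x).filter (fun y => u y < M),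
        μ x y * |u y - u x| ^ (m - 2) * (u y - u x)
      ≤ -(M ^ p / Real.sqrt (2 * p₀) ^ (m - 1) *
          (vMeasure μ x * min (Real.sqrt (2 * p₀) * gradNorm μ u x) M ^ (m - 1))) := by
  have hv := vMeasure_pos hnonneg hadj hlf hinf hconn x
  set Dt := min (Real.sqrt (2 * p₀) * gradNorm μ u x) M with hDtdef
  have hc₁ : (0:ℝ) < Real.sqrt (2 * p₀) := Real.sqrt_pos.mpr (by linarith)
  have hDt0 : 0 ≤ Dt := le_min (mul_nonneg hc₁.le (gradNorm_nonneg u x)) hM.le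
  set S := ∑ y ∈ nbhd hlf x, μ x y * |u y - u x| ^ (m - 2) * (u y - u x) with hSdef
  -- step 1 : S ≤ -(vM x * (u x ^ p * grad ^ q))
  have h1 : S ≤ -(vMeasure μ x * (u x ^ p * gradNorm μ u x ^ q)) := by
    have hs := hsol x
    rw [lapM] at hs
    have hfe : ∑ᶠ y, μ x y * |u y - u x| ^ (m - 2) * (u y - u x) = S :=
      finsum_eq_nbhd hnonneg hadj hlf x _ (fun y hy => by rw [hy]; ring)
    rw [hfe] at hs
    have h2 : (vMeasure μ x)⁻¹ * S ≤ -(u x ^ p * gradNorm μ u x ^ q) := by linarith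
    calc S = vMeasure μ x * ((vMeasure μ x)⁻¹ * S) := by
            field_simp
      _ ≤ vMeasure μ x * -(u x ^ p * gradNorm μ u x ^ q) :=
            mul_le_mul_of_nonneg_left h2 hv.le
      _ = -(vMeasure μ x * (u x ^ p * gradNorm μ u x ^ q)) := by ring
  -- step 2 : filtered sum ≤ S
  have h2 : ∑ y ∈ (nbhd hlf x).filter (fun y => u y < M),
      μ x y * |u y - u x| ^ (m - 2) * (u y - u x) ≤ S := by
    rw [hSdef, ← Finset.sum_filter_add_sum_filter_not (nbhd hlf x) (fun y => u y < M)]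
    have : 0 ≤ ∑ y ∈ (nbhd hlf x).filter (fun y => ¬ u y < M),
        μ x y * |u y - u x| ^ (m - 2) * (u y - u x) := by
      apply Finset.sum_nonneg
      intro y hy
      simp only [Finset.mem_filter, not_lt] at hy
      have hyx : 0 ≤ u y - u x := by linarith [hy.2]
      exact mul_nonneg (mul_nonneg (hnonneg x y) (Real.rpow_nonneg (abs_nonneg _) _)) hyx
    linarith
  -- step 3 : lower bound for the reaction term
  have h3 : M ^ p / Real.sqrt (2 * p₀) ^ (m - 1) * Dt ^ (m - 1)
      ≤ u x ^ p * gradNorm μ u x ^ q := by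
    have ha : M ^ p ≤ u x ^ p := Real.rpow_le_rpow_of_nonpos (hu x) hxM.le hp.le
    have hdiv : Dt / Real.sqrt (2 * p₀) ≤ gradNorm μ u x := by
      rw [div_le_iff₀ hc₁]
      calc Dt ≤ Real.sqrt (2 * p₀) * gradNorm μ u x := min_le_left _ _
        _ = gradNorm μ u x * Real.sqrt (2 * p₀) := by ring
    have hb : Dt ^ (m - 1) / Real.sqrt (2 * p₀) ^ (m - 1) ≤ gradNorm μ u x ^ (m - 1) := by
      rw [← Real.div_rpow hDt0 hc₁.le]
      exact Real.rpow_le_rpow (div_nonneg hDt0 hc₁.le) hdiv (by linarith)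
    have := mul_le_mul ha hb
      (div_nonneg (Real.rpow_nonneg hDt0 _) (Real.rpow_nonneg hc₁.le _))
      (Real.rpow_nonneg (hu x).le _)
    rw [hq]
    calc M ^ p / Real.sqrt (2 * p₀) ^ (m - 1) * Dt ^ (m - 1)
        = M ^ p * (Dt ^ (m - 1) / Real.sqrt (2 * p₀) ^ (m - 1)) := by ring
      _ ≤ u x ^ p * gradNorm μ u x ^ (m - 1) := this
  calc ∑ y ∈ (nbhd hlf x).filter (fun y => u y < M),
      μ x y * |u y - u x| ^ (m - 2) * (u y - u x) ≤ S := h2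
    _ ≤ -(vMeasure μ x * (u x ^ p * gradNorm μ u x ^ q)) := h1
    _ ≤ -(M ^ p / Real.sqrt (2 * p₀) ^ (m - 1) * (vMeasure μ x * Dt ^ (m - 1))) := by
        have := mul_le_mul_of_nonneg_left h3 hv.le
        nlinarith [this]


lemma volume_bound (hsymm : ∀ x y, μ x y = μ y x) (hnonneg : ∀ x y, 0 ≤ μ x y)
    (hadj : ∀ x y, 0 < μ x y ↔ G.Adj x y)
    (hlf : ∀ x : V, (G.neighborSet x).Finite) (hinf : Infinite V) (hconn : G.Connected)
    {p₀ : ℝ} (hp₀ : 1 < p₀) (hcond : ∀ x y, G.Adj x y → 1 / p₀ ≤ μ x y / vMeasure μ x)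
    (o : V) (n : ℕ) :
    ∑ x ∈ (ball_finite G hconn hlf o n).toFinset, vMeasure μ x
      ≤ vMeasure μ o + p₀ * Wvol G μ o n := by
  classical
  set Bn := (ball_finite G hconn hlf o n).toFinset with hBn
  have hmem : ∀ x : V, x ∈ Bn ↔ G.dist o x ≤ n := by
    intro x; simp [hBn, Set.Finite.mem_toFinset]
  have ho : o ∈ Bn := (hmem o).mpr (by simp [SimpleGraph.dist_self])
  -- choose a closer neighbour
  choose! pk hpk1 hpk2 using fun x (hx : x ≠ o) => exists_adj_closer G hconn o x hx
  -- the inner sums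
  set W1 : V → ℝ := fun a => ∑ᶠ b, if G.dist o a ≤ n ∧ G.dist o a < G.dist o b then μ a b else 0
    with hW1def
  have hW1sum : ∀ a, W1 a = ∑ b ∈ nbhd hlf a,
      if G.dist o a ≤ n ∧ G.dist o a < G.dist o b then μ a b else 0 := by
    intro a
    exact finsum_eq_nbhd hnonneg hadj hlf a _ (fun b hb => by split <;> simp [hb])
  have hW1nonneg : ∀ a, 0 ≤ W1 a := by
    intro a
    rw [hW1sum a]
    apply Finset.sum_nonneg
    intro b _
    split
    · exact hnonneg a b
    · exact le_refl 0
  have hWv : Wvol G μ o n = ∑ a ∈ Bn, W1 a := by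
    rw [Wvol]
    apply finsum_eq_finset_sum_of_support_subset
    intro a ha
    simp only [Function.mem_support] at ha
    rw [Finset.mem_coe, hmem]
    by_contra hc
    apply ha
    have : ∀ b : V, (if G.dist o a ≤ n ∧ G.dist o a < G.dist o b then μ a b else 0) = 0 := by
      intro b
      rw [if_neg]
      tauto
    simp only [this, finsum_zero]
  -- main estimate
  have hsplit : ∑ x ∈ Bn, vMeasure μ x = vMeasure μ o + ∑ x ∈ Bn.erase o, vMeasure μ x :=
    (Finset.add_sum_erase Bn _ ho).symm
  have hstep1 : ∑ x ∈ Bn.erase o, vMeasure μ x ≤ p₀ * ∑ x ∈ Bn.erase o, μ (pk x) x := by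
    rw [Finset.mul_sum]
    apply Finset.sum_le_sum
    intro x hx
    have hxo : x ≠ o := (Finset.mem_erase.mp hx).1
    have hadjx : G.Adj x (pk x) := (hpk1 x hxo).symm
    calc vMeasure μ x ≤ p₀ * μ x (pk x) :=
          vMeasure_le hnonneg hadj hlf hinf hconn hp₀ hcond hadjx
      _ = p₀ * μ (pk x) x := by rw [hsymm]
  have hmaps : ∀ x ∈ Bn.erase o, pk x ∈ Bn := by
    intro x hx
    obtain ⟨hxo, hxB⟩ := Finset.mem_erase.mp hx
    rw [hmem] at hxB ⊢
    have := hpk2 x hxo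
    omega
  have hstep2 : ∑ x ∈ Bn.erase o, μ (pk x) x ≤ ∑ a ∈ Bn, W1 a := by
    rw [← Finset.sum_fiberwise_of_maps_to hmaps (fun x => μ (pk x) x)]
    apply Finset.sum_le_sum
    intro a _
    have hcongr : ∑ x ∈ (Bn.erase o).filter (fun x => pk x = a), μ (pk x) x
        = ∑ x ∈ (Bn.erase o).filter (fun x => pk x = a),
            (if G.dist o a ≤ n ∧ G.dist o a < G.dist o x then μ a x else 0) := by
      apply Finset.sum_congr rfl
      intro x hx
      obtain ⟨hx1, hx2⟩ := Finset.mem_filter.mp hx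
      obtain ⟨hxo, hxB⟩ := Finset.mem_erase.mp hx1
      rw [hmem] at hxB
      have h2 := hpk2 x hxo
      rw [hx2] at h2 ⊢
      rw [if_pos ⟨by omega, h2⟩]
    rw [hcongr, hW1sum a]
    apply Finset.sum_le_sum_of_subset_of_nonneg
    · intro x hx
      obtain ⟨hx1, hx2⟩ := Finset.mem_filter.mp hx
      have hxo : x ≠ o := (Finset.mem_erase.mp hx1).1
      have := (hpk1 x hxo)
      rw [hx2] at this
      exact (mem_nbhd hlf).mpr this
    · intro b _ _
      split
      · exact hnonneg a b
      · exact le_refl 0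
  rw [hsplit, hWv]
  have := le_trans hstep2 (le_refl _)
  nlinarith [hstep1, hstep2, le_trans hstep1 (mul_le_mul_of_nonneg_left hstep2 (by linarith : (0:ℝ) ≤ p₀))]

lemma energy_recursion (hsymm : ∀ x y, μ x y = μ y x) (hnonneg : ∀ x y, 0 ≤ μ x y)
    (hadj : ∀ x y, 0 < μ x y ↔ G.Adj x y)
    (hlf : ∀ x : V, (G.neighborSet x).Finite) (hinf : Infinite V) (hconn : G.Connected)
    {p₀ : ℝ} (hp₀ : 1 < p₀) (hcond : ∀ x y, G.Adj x y → 1 / p₀ ≤ μ x y / vMeasure μ x)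
    {m p q : ℝ} (hm : 1 < m) (hp : p < 0) (hq : q = m - 1)
    (u : V → ℝ) (hu : ∀ x, 0 < u x)
    (hsol : ∀ x, lapM μ m u x + u x ^ p * gradNorm μ u x ^ q ≤ 0)
    {M : ℝ} (hM : 0 < M) (o : V) (n : ℕ) :
    M ^ p / Real.sqrt (2 * p₀) ^ (m - 1) *
        (∑ x ∈ ((ball_finite G hconn hlf o (n+1)).toFinset).filter (fun x => u x < M),
          vMeasure μ x * min (Real.sqrt (2 * p₀) * gradNorm μ u x) M ^ (m - 1))
      + (∑ x ∈ ((ball_finite G hconn hlf o n).toFinset).filter (fun x => u x < M),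
          vMeasure μ x * min (Real.sqrt (2 * p₀) * gradNorm μ u x) M ^ (m - 1))
      ≤ ∑ x ∈ ((ball_finite G hconn hlf o (n+1)).toFinset).filter (fun x => u x < M),
          vMeasure μ x * min (Real.sqrt (2 * p₀) * gradNorm μ u x) M ^ (m - 1) := by
  classical
  set c₁ : ℝ := Real.sqrt (2 * p₀) with hc₁def
  have hc₁ : (0:ℝ) < c₁ := Real.sqrt_pos.mpr (by linarith)
  set κ : ℝ := M ^ p / c₁ ^ (m - 1) with hκdef
  set Dt : V → ℝ := fun x => min (c₁ * gradNorm μ u x) M with hDtdef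
  have hDt0 : ∀ x, 0 ≤ Dt x := fun x => le_min (mul_nonneg hc₁.le (gradNorm_nonneg u x)) hM.le
  have hDtp : ∀ x, (0:ℝ) ≤ Dt x ^ (m - 1) := fun x => Real.rpow_nonneg (hDt0 x) _
  set F : ℕ → Finset V := fun k =>
    ((ball_finite G hconn hlf o k).toFinset).filter (fun x => u x < M) with hFdef
  have hFmem : ∀ k (x : V), x ∈ F k ↔ G.dist o x ≤ k ∧ u x < M := by
    intro k x
    simp [hFdef, Set.Finite.mem_toFinset]
  set t : V → V → ℝ := fun x y => μ x y * |u y - u x| ^ (m - 2) * (u y - u x) with htdef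
  have htanti : ∀ x y : V, t x y + t y x = 0 := by
    intro x y
    simp only [htdef]
    rw [hsymm y x, abs_sub_comm (u x) (u y)]
    ring
  set A : V → Finset V := fun x => (nbhd hlf x).filter (fun y => u y < M) with hAdef
  set E : ℕ → ℝ := fun k => ∑ x ∈ F k, vMeasure μ x * Dt x ^ (m - 1) with hEdef
  -- the double sum
  set T : ℝ := ∑ x ∈ F (n+1), ∑ y ∈ A x, t x y with hTdef
  have h_a : T ≤ -(κ * E (n+1)) := by
    have : T ≤ ∑ x ∈ F (n+1), -(κ * (vMeasure μ x * Dt x ^ (m - 1))) := by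
      apply Finset.sum_le_sum
      intro x hx
      have hxM : u x < M := ((hFmem (n+1) x).mp hx).2
      exact key_pointwise hnonneg hadj hlf hinf hconn hp₀ hcond hm hp hq u hu hsol hM hxM
    calc T ≤ _ := this
      _ = -(κ * E (n+1)) := by
          rw [hEdef]
          rw [Finset.sum_neg_distrib, Finset.mul_sum]
  -- split the double sum
  have hsplit : ∀ x, ∑ y ∈ A x, t x y
      = (∑ y ∈ (A x).filter (fun y => y ∈ F (n+1)), t x y)
        + ∑ y ∈ (A x).filter (fun y => y ∉ F (n+1)), t x y := by
    intro x
    exact (Finset.sum_filter_add_sum_filter_not (A x) (fun y => y ∈ F (n+1)) _).symm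
  have hT12 : T = (∑ x ∈ F (n+1), ∑ y ∈ (A x).filter (fun y => y ∈ F (n+1)), t x y)
      + ∑ x ∈ F (n+1), ∑ y ∈ (A x).filter (fun y => y ∉ F (n+1)), t x y := by
    rw [hTdef, ← Finset.sum_add_distrib]
    exact Finset.sum_congr rfl (fun x _ => hsplit x)
  -- T₁ = 0 by antisymmetry
  have hT1 : (∑ x ∈ F (n+1), ∑ y ∈ (A x).filter (fun y => y ∈ F (n+1)), t x y) = 0 := by
    rw [Finset.sum_sigma']
    apply Finset.sum_involution (fun (z : (_ : V) × V) _ => (⟨z.2, z.1⟩ : (_ : V) × V))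
    · intro z hz
      exact htanti z.1 z.2
    · intro z hz _
      intro hc
      have h1 : z.2 = z.1 := congrArg Sigma.fst hc
      rw [Finset.mem_sigma] at hz
      have hz2 := hz.2
      rw [Finset.mem_filter] at hz2
      have hzA := hz2.1
      rw [hAdef, Finset.mem_filter] at hzA
      have hadj12 : G.Adj z.1 z.2 := (mem_nbhd hlf).mp hzA.1
      rw [h1] at hadj12
      exact G.loopless.irrefl z.1 hadj12
    · intro z hz
      rw [Finset.mem_sigma] at hz ⊢
      obtain ⟨hz1, hz2⟩ := hz
      rw [Finset.mem_filter] at hz2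
      obtain ⟨hzA, hzF⟩ := hz2
      rw [hAdef, Finset.mem_filter] at hzA
      refine ⟨hzF, ?_⟩
      rw [Finset.mem_filter]
      refine ⟨?_, hz1⟩
      rw [hAdef, Finset.mem_filter]
      exact ⟨(mem_nbhd hlf).mpr ((mem_nbhd hlf).mp hzA.1).symm, ((hFmem (n+1) z.1).mp hz1).2⟩
    · intro z hz
      rfl
  -- T₂ bound
  have hT2 : (∑ x ∈ F (n+1), ∑ y ∈ (A x).filter (fun y => y ∉ F (n+1)), t x y)
      ≥ -(E (n+1) - E n) := by
    -- per-vertex bounds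
    have hzero : ∀ x ∈ F (n+1), G.dist o x ≤ n →
        (∑ y ∈ (A x).filter (fun y => y ∉ F (n+1)), t x y) = 0 := by
      intro x hx hdx
      have : (A x).filter (fun y => y ∉ F (n+1)) = ∅ := by
        rw [Finset.filter_eq_empty_iff]
        intro y hy
        rw [hAdef, Finset.mem_filter] at hy
        have hadjxy : G.Adj x y := (mem_nbhd hlf).mp hy.1
        simp only [not_not]
        rw [hFmem]
        refine ⟨?_, hy.2⟩
        have h1 : G.dist o y ≤ G.dist o x + G.dist x y := hconn.dist_triangle
        have h2 : G.dist x y = 1 := SimpleGraph.dist_eq_one_iff_adj.mpr hadjxy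
        omega
      rw [this, Finset.sum_empty]
    have hlow : ∀ x ∈ F (n+1),
        -(vMeasure μ x * Dt x ^ (m - 1)) ≤ ∑ y ∈ (A x).filter (fun y => y ∉ F (n+1)), t x y := by
      intro x hx
      have hxM : u x < M := ((hFmem (n+1) x).mp hx).2
      have step : ∀ y ∈ (A x).filter (fun y => y ∉ F (n+1)),
          -(μ x y * Dt x ^ (m - 1)) ≤ t x y := by
        intro y hy
        have hyA := (Finset.mem_filter.mp hy).1
        rw [hAdef, Finset.mem_filter] at hyA
        have hadjxy : G.Adj x y := (mem_nbhd hlf).mp hyA.1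
        exact term_bound hnonneg hadj hlf hinf hconn hp₀ hcond hm u hM hadjxy
          (hu x) (hu y) hxM hyA.2
      calc -(vMeasure μ x * Dt x ^ (m - 1))
          ≤ -((∑ y ∈ (A x).filter (fun y => y ∉ F (n+1)), μ x y) * Dt x ^ (m - 1)) := by
            have hsub : (A x).filter (fun y => y ∉ F (n+1)) ⊆ nbhd hlf x := by
              intro y hy
              have hyA := (Finset.mem_filter.mp hy).1
              rw [hAdef, Finset.mem_filter] at hyA
              exact hyA.1
            have hle : (∑ y ∈ (A x).filter (fun y => y ∉ F (n+1)), μ x y) ≤ vMeasure μ x := by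
              rw [vMeasure_eq_sum hnonneg hadj hlf x]
              exact Finset.sum_le_sum_of_subset_of_nonneg hsub (fun y _ _ => hnonneg x y)
            nlinarith [hDtp x, hle]
        _ = ∑ y ∈ (A x).filter (fun y => y ∉ F (n+1)), -(μ x y * Dt x ^ (m - 1)) := by
            rw [Finset.sum_neg_distrib, ← Finset.sum_mul]
        _ ≤ ∑ y ∈ (A x).filter (fun y => y ∉ F (n+1)), t x y := Finset.sum_le_sum step
    -- sum the per-vertex bounds
    have hEsplit : E (n+1) = E n + ∑ x ∈ (F (n+1)).filter (fun x => ¬ G.dist o x ≤ n),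
        vMeasure μ x * Dt x ^ (m - 1) := by
      have hFn : (F (n+1)).filter (fun x => G.dist o x ≤ n) = F n := by
        ext x
        simp only [Finset.mem_filter, hFmem]
        constructor
        · rintro ⟨⟨h1, h2⟩, h3⟩; exact ⟨h3, h2⟩
        · rintro ⟨h1, h2⟩; exact ⟨⟨by omega, h2⟩, h1⟩
      calc E (n+1) = ∑ x ∈ (F (n+1)).filter (fun x => G.dist o x ≤ n),
              vMeasure μ x * Dt x ^ (m - 1)
            + ∑ x ∈ (F (n+1)).filter (fun x => ¬ G.dist o x ≤ n),
              vMeasure μ x * Dt x ^ (m - 1) :=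
            (Finset.sum_filter_add_sum_filter_not (F (n+1)) _ _).symm
        _ = E n + _ := by rw [hFn]
    calc ∑ x ∈ F (n+1), ∑ y ∈ (A x).filter (fun y => y ∉ F (n+1)), t x y
        = ∑ x ∈ (F (n+1)).filter (fun x => G.dist o x ≤ n),
            (∑ y ∈ (A x).filter (fun y => y ∉ F (n+1)), t x y)
          + ∑ x ∈ (F (n+1)).filter (fun x => ¬ G.dist o x ≤ n),
            (∑ y ∈ (A x).filter (fun y => y ∉ F (n+1)), t x y) :=
          (Finset.sum_filter_add_sum_filter_not (F (n+1)) _ _).symm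
      _ ≥ 0 + ∑ x ∈ (F (n+1)).filter (fun x => ¬ G.dist o x ≤ n),
            (-(vMeasure μ x * Dt x ^ (m - 1))) := by
          apply add_le_add
          · apply le_of_eq
            apply (Finset.sum_eq_zero ?_).symm
            intro x hx
            rw [Finset.mem_filter] at hx
            exact hzero x hx.1 hx.2
          · apply Finset.sum_le_sum
            intro x hx
            rw [Finset.mem_filter] at hx
            exact hlow x hx.1
      _ = -(E (n+1) - E n) := by
          rw [Finset.sum_neg_distrib, hEsplit]
          ring
  -- combine
  have final : κ * E (n+1) + E n ≤ E (n+1) := by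
    have h2 : ∑ x ∈ F (n+1), ∑ y ∈ (A x).filter (fun y => y ∉ F (n+1)), t x y
        ≤ -(κ * E (n+1)) := by
      have h3 := h_a
      rw [hT12, hT1, zero_add] at h3
      exact h3
    have h4 := le_trans hT2 h2
    linarith
  exact final

end wg

theorem statement7
    (G : SimpleGraph V) (μ : V → V → ℝ)
    (hsymm : ∀ x y, μ x y = μ y x)
    (hnonneg : ∀ x y, 0 ≤ μ x y)
    (hadj : ∀ x y, 0 < μ x y ↔ G.Adj x y)
    (hinf : Infinite V) (hconn : G.Connected)
    (hlf : ∀ x, (G.neighborSet x).Finite)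
    (p₀ : ℝ) (hp₀ : 1 < p₀)
    (hcond : ∀ x y, G.Adj x y → 1 / p₀ ≤ μ x y / vMeasure μ x)
    (m p q : ℝ) (hm : 1 < m)
    (hp : p < 0) (hq : q = m - 1)
    (o : V) (α C : ℝ) (hα : 0 < α) (hC : 0 < C) (N : ℕ)
    (hW : ∀ n : ℕ, N ≤ n → Wvol G μ o n ≤ C * (n : ℝ) ^ α)
    (u : V → ℝ) (hu : ∀ x, 0 < u x)
    (hgrad : ∀ x, q < 0 → 0 < gradNorm μ u x)
    (hsol : ∀ x, lapM μ m u x + u x ^ p * gradNorm μ u x ^ q ≤ 0) :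
    ∃ c : ℝ, ∀ x, u x = c := by
  classical
  set c₁ : ℝ := Real.sqrt (2 * p₀) with hc₁def
  have hc₁ : (0:ℝ) < c₁ := Real.sqrt_pos.mpr (by linarith)
  set M : ℝ := u o + 1 with hMdef
  have hM : 0 < M := by have := hu o; linarith
  have huoM : u o < M := by linarith
  set κ : ℝ := M ^ p / c₁ ^ (m - 1) with hκdef
  have hκpos : 0 < κ :=
    div_pos (Real.rpow_pos_of_pos hM p) (Real.rpow_pos_of_pos hc₁ _)
  set Dt : V → ℝ := fun x => min (c₁ * gradNorm μ u x) M with hDtdef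
  have hDt0 : ∀ x, 0 ≤ Dt x := fun x => le_min (mul_nonneg hc₁.le (gradNorm_nonneg u x)) hM.le
  have hDtM : ∀ x, Dt x ≤ M := fun x => min_le_right _ _
  set E : ℕ → ℝ := fun k => ∑ x ∈ ((ball_finite G hconn hlf o k).toFinset).filter
      (fun x => u x < M), vMeasure μ x * Dt x ^ (m - 1) with hEdef
  have hE0 : ∀ n, 0 ≤ E n := by
    intro n
    apply Finset.sum_nonneg
    intro x _
    exact mul_nonneg (vMeasure_pos hnonneg hadj hlf hinf hconn x).le
      (Real.rpow_nonneg (hDt0 x) _)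
  have hrec : ∀ n, κ * E (n+1) + E n ≤ E (n+1) := by
    intro n
    exact energy_recursion hsymm hnonneg hadj hlf hinf hconn hp₀ hcond hm hp hq u hu hsol hM o n
  have hrec2 : ∀ n, E n ≤ (1 - κ) * E (n+1) := by
    intro n
    have := hrec n
    nlinarith [this]
  -- polynomial upper bound for E
  have hEub : ∀ n : ℕ, N ≤ n → E n ≤ M ^ (m-1) * (vMeasure μ o + p₀ * (C * (n:ℝ) ^ α)) := by
    intro n hn
    have h1 : E n ≤ ∑ x ∈ (ball_finite G hconn hlf o n).toFinset,
        vMeasure μ x * M ^ (m - 1) := by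
      rw [hEdef]
      refine le_trans (Finset.sum_le_sum ?_) (Finset.sum_le_sum_of_subset_of_nonneg
        (Finset.filter_subset _ _) ?_)
      · intro x _
        exact mul_le_mul_of_nonneg_left
          (Real.rpow_le_rpow (hDt0 x) (hDtM x) (by linarith))
          (vMeasure_pos hnonneg hadj hlf hinf hconn x).le
      · intro x _ _
        exact mul_nonneg (vMeasure_pos hnonneg hadj hlf hinf hconn x).le
          (Real.rpow_nonneg hM.le _)
    have h2 : ∑ x ∈ (ball_finite G hconn hlf o n).toFinset, vMeasure μ x * M ^ (m - 1)
        = M ^ (m-1) * ∑ x ∈ (ball_finite G hconn hlf o n).toFinset, vMeasure μ x := by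
      rw [Finset.mul_sum]
      exact Finset.sum_congr rfl (fun x _ => by ring)
    have h3 := volume_bound hsymm hnonneg hadj hlf hinf hconn hp₀ hcond o n
    have h4 : vMeasure μ o + p₀ * Wvol G μ o n
        ≤ vMeasure μ o + p₀ * (C * (n:ℝ) ^ α) := by
      have := hW n hn
      nlinarith [this]
    have hMp : (0:ℝ) ≤ M ^ (m-1) := Real.rpow_nonneg hM.le _
    calc E n ≤ _ := h1
      _ = _ := h2
      _ ≤ M ^ (m-1) * (vMeasure μ o + p₀ * Wvol G μ o n) :=
          mul_le_mul_of_nonneg_left h3 hMp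
      _ ≤ _ := mul_le_mul_of_nonneg_left h4 hMp
  -- E vanishes identically
  have hEzero : ∀ n, E n = 0 := by
    intro n₀
    refine le_antisymm ?_ (hE0 n₀)
    by_cases hκ1 : 1 ≤ κ
    · have h := hrec2 n₀
      have : (1 - κ) * E (n₀ + 1) ≤ 0 :=
        mul_nonpos_of_nonpos_of_nonneg (by linarith) (hE0 (n₀+1))
      linarith
    · push_neg at hκ1
      set r : ℝ := 1 - κ with hrdef
      have hr0 : 0 < r := by simp only [hrdef]; linarith
      have hr1 : r < 1 := by simp only [hrdef]; linarith
      have hiter : ∀ k : ℕ, E n₀ ≤ r ^ k * E (n₀ + k) := by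
        intro k
        induction k with
        | zero => simp
        | succ k ih =>
          calc E n₀ ≤ r ^ k * E (n₀ + k) := ih
            _ ≤ r ^ k * (r * E (n₀ + k + 1)) := by
                apply mul_le_mul_of_nonneg_left (hrec2 (n₀ + k)) (pow_nonneg hr0.le k)
            _ = r ^ (k+1) * E (n₀ + (k+1)) := by
                rw [show n₀ + (k+1) = n₀ + k + 1 from rfl]; ring
      -- convert the polynomial bound
      set d : ℕ := ⌈α⌉₊ with hddef
      have hbound : ∀ k : ℕ, max N 1 ≤ k →
          E n₀ ≤ M ^ (m-1) * vMeasure μ o * r ^ k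
            + (M ^ (m-1) * (p₀ * C) * ((n₀:ℝ) + 1) ^ d) * (((k:ℝ) + 1) ^ d * r ^ k) := by
        intro k hk
        have hkN : N ≤ n₀ + k := by omega
        have hk1 : 1 ≤ n₀ + k := by omega
        have h5 := hEub (n₀ + k) hkN
        have h6 : ((n₀ + k : ℕ):ℝ) ^ α ≤ ((n₀ + k : ℕ):ℝ) ^ (d:ℕ) := by
          rw [← Real.rpow_natCast _ d]
          apply Real.rpow_le_rpow_of_exponent_le
          · exact_mod_cast hk1
          · exact_mod_cast Nat.le_ceil α
        have h7 : ((n₀ + k : ℕ):ℝ) ^ (d:ℕ) ≤ ((n₀:ℝ) + 1) ^ d * ((k:ℝ) + 1) ^ d := by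
          rw [← mul_pow]
          apply pow_le_pow_left₀ (by positivity)
          push_cast
          nlinarith [Nat.cast_nonneg (α := ℝ) n₀, Nat.cast_nonneg (α := ℝ) k]
        have h8 : E (n₀ + k) ≤ M ^ (m-1) * vMeasure μ o
            + M ^ (m-1) * (p₀ * C) * (((n₀:ℝ) + 1) ^ d * ((k:ℝ) + 1) ^ d) := by
          have hMp : (0:ℝ) ≤ M ^ (m-1) := Real.rpow_nonneg hM.le _
          have h9 : ((n₀ + k : ℕ):ℝ) ^ α ≤ ((n₀:ℝ) + 1) ^ d * ((k:ℝ) + 1) ^ d :=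
            le_trans h6 h7
          have h10 : p₀ * (C * ((n₀ + k : ℕ):ℝ) ^ α)
              ≤ p₀ * C * (((n₀:ℝ) + 1) ^ d * ((k:ℝ) + 1) ^ d) := by
            have h9' := mul_le_mul_of_nonneg_left h9 (show (0:ℝ) ≤ p₀ * C by positivity)
            linarith [h9']
          have h11 := mul_le_mul_of_nonneg_left h10 hMp
          nlinarith [h5, h11]
        calc E n₀ ≤ r ^ k * E (n₀ + k) := hiter k
          _ ≤ r ^ k * (M ^ (m-1) * vMeasure μ o
              + M ^ (m-1) * (p₀ * C) * (((n₀:ℝ) + 1) ^ d * ((k:ℝ) + 1) ^ d)) :=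
            mul_le_mul_of_nonneg_left h8 (pow_nonneg hr0.le k)
          _ = M ^ (m-1) * vMeasure μ o * r ^ k
            + (M ^ (m-1) * (p₀ * C) * ((n₀:ℝ) + 1) ^ d) * (((k:ℝ) + 1) ^ d * r ^ k) := by
              ring
      -- the right-hand side tends to zero
      have htend1 : Filter.Tendsto (fun k : ℕ => r ^ k) Filter.atTop (nhds 0) :=
        tendsto_pow_atTop_nhds_zero_of_lt_one hr0.le hr1
      have htend2 : Filter.Tendsto (fun k : ℕ => ((k:ℝ) + 1) ^ d * r ^ k)
          Filter.atTop (nhds 0) := by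
        have hsum : Summable (fun k : ℕ => ((k:ℝ)) ^ d * r ^ k) :=
          summable_pow_mul_geometric_of_norm_lt_one d (by rw [Real.norm_eq_abs, abs_of_pos hr0]; exact hr1)
        have h0 : Filter.Tendsto (fun k : ℕ => ((k:ℝ)) ^ d * r ^ k) Filter.atTop (nhds 0) :=
          hsum.tendsto_atTop_zero
        have h1 : Filter.Tendsto (fun k : ℕ => (((k+1:ℕ):ℝ)) ^ d * r ^ (k+1)) Filter.atTop (nhds 0) :=
          h0.comp (Filter.tendsto_add_atTop_nat 1)
        have h2 : Filter.Tendsto (fun k : ℕ => r⁻¹ * ((((k+1:ℕ):ℝ)) ^ d * r ^ (k+1)))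
            Filter.atTop (nhds 0) := by
          simpa using h1.const_mul r⁻¹
        have h3 : (fun k : ℕ => ((k:ℝ) + 1) ^ d * r ^ k)
            = fun k : ℕ => r⁻¹ * ((((k+1:ℕ):ℝ)) ^ d * r ^ (k+1)) := by
          funext k
          push_cast
          rw [pow_succ]
          field_simp
        rw [h3]
        exact h2
      have htend : Filter.Tendsto (fun k : ℕ => M ^ (m-1) * vMeasure μ o * r ^ k
          + (M ^ (m-1) * (p₀ * C) * ((n₀:ℝ) + 1) ^ d) * (((k:ℝ) + 1) ^ d * r ^ k))
          Filter.atTop (nhds 0) := by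
        have := (htend1.const_mul (M ^ (m-1) * vMeasure μ o)).add
          (htend2.const_mul (M ^ (m-1) * (p₀ * C) * ((n₀:ℝ) + 1) ^ d))
        simpa using this
      refine ge_of_tendsto htend ?_
      filter_upwards [Filter.eventually_ge_atTop (max N 1)] with k hk
      exact hbound k hk
  -- zero energy forces the gradient to vanish on the sublevel set
  have hgrad0 : ∀ x : V, u x < M → gradNorm μ u x = 0 := by
    intro x hxM
    have hx : x ∈ ((ball_finite G hconn hlf o (G.dist o x)).toFinset).filter
        (fun x => u x < M) := by
      rw [Finset.mem_filter, Set.Finite.mem_toFinset, Set.mem_setOf_eq]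
      exact ⟨le_refl _, hxM⟩
    have hterm : vMeasure μ x * Dt x ^ (m - 1) = 0 := by
      have hz := hEzero (G.dist o x)
      rw [hEdef] at hz
      exact (Finset.sum_eq_zero_iff_of_nonneg (fun y _ =>
        mul_nonneg (vMeasure_pos hnonneg hadj hlf hinf hconn y).le
          (Real.rpow_nonneg (hDt0 y) _))).mp hz x hx
    have hvx := vMeasure_pos hnonneg hadj hlf hinf hconn x
    have hDtpow : Dt x ^ (m - 1) = 0 := by
      rcases mul_eq_zero.mp hterm with h | h
      · exact absurd h hvx.ne'
      · exact h
    have hDtz : Dt x = 0 := by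
      by_contra hc
      have : 0 < Dt x := lt_of_le_of_ne (hDt0 x) (Ne.symm hc)
      exact absurd hDtpow (Real.rpow_pos_of_pos this _).ne'
    have hDtz' : min (c₁ * gradNorm μ u x) M = 0 := hDtz
    have : c₁ * gradNorm μ u x = 0 := by
      rcases le_total (c₁ * gradNorm μ u x) M with h | h
      · rwa [min_eq_left h] at hDtz'
      · exfalso
        rw [min_eq_right h] at hDtz'
        exact hM.ne' hDtz'
    rcases mul_eq_zero.mp this with h | h
    · exact absurd h hc₁.ne'
    · exact h
  -- vanishing gradient forces local constancy
  have hloc : ∀ x : V, u x < M → ∀ y : V, G.Adj x y → u y = u x := by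
    intro x hxM y hxy
    have hg := hgrad0 x hxM
    have hS : ∑ᶠ z, μ x z / (2 * vMeasure μ x) * (u z - u x) ^ 2 = 0 := by
      have h0 : (0:ℝ) ≤ ∑ᶠ z, μ x z / (2 * vMeasure μ x) * (u z - u x) ^ 2 := by
        apply finsum_nonneg
        intro z
        have := hnonneg x z
        have := (vMeasure_pos hnonneg hadj hlf hinf hconn x)
        positivity
      rw [gradNorm] at hg
      exact (Real.sqrt_eq_zero h0).mp hg
    have hSsum : ∑ z ∈ nbhd hlf x, μ x z / (2 * vMeasure μ x) * (u z - u x) ^ 2 = 0 := by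
      rw [← finsum_eq_nbhd hnonneg hadj hlf x _ (fun z hz => by rw [hz]; ring)]
      exact hS
    have hterm := (Finset.sum_eq_zero_iff_of_nonneg (fun z _ => by
      have := hnonneg x z
      have := (vMeasure_pos hnonneg hadj hlf hinf hconn x)
      positivity)).mp hSsum y ((mem_nbhd hlf).mpr hxy)
    have hμxy : 0 < μ x y := (hadj x y).mpr hxy
    have hvx := vMeasure_pos hnonneg hadj hlf hinf hconn x
    have h2 : (u y - u x) ^ 2 = 0 := by
      have hne : μ x y / (2 * vMeasure μ x) ≠ 0 := by positivity
      rcases mul_eq_zero.mp hterm with h | h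
      · exact absurd h hne
      · exact h
    have := pow_eq_zero_iff (n := 2) (by norm_num) |>.mp h2
    linarith [sub_eq_zero.mp this]
  -- propagate along walks
  have hwalk : ∀ (a b : V), G.Walk a b → u a = u o → u b = u o := by
    intro a b w
    induction w with
    | nil => exact id
    | cons h p ih =>
      intro ha
      apply ih
      rw [hloc _ (by rw [ha]; exact huoM) _ h, ha]
  refine ⟨u o, fun x => ?_⟩
  obtain ⟨w⟩ := hconn o x
  exact hwalk o x w rfl
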